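/- Let y be the fixed point beginning in the letter c of the substitution τ : b ↦ ccb, c ↦ cb on the alphabet {b, c}. Then y is rich. -/

import Mathlib

open List

/-- The prefix of length `n` of an infinite word `x`. -/
def wordTake {A : Type*} (x : ℕ → A) (n : ℕ) : List A := (List.range n).map x

/-- The finite word `u` occurs in the infinite word `x` at position `i`. -/
def OccursAt {A : Type*} (u : List A) (x : ℕ → A) (i : ℕ) : Prop :=
  (List.range u.length).map (fun k => x (i + k)) = u

/-- `u` is a factor of the infinite word `x`. -/
def IsFactor {A : Type*} (u : List A) (x : ℕ → A) : Prop := ∃ i, OccursAt u x i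

/-- A palindrome is a finite word equal to its reversal. -/
def IsPalindrome {A : Type*} (u : List A) : Prop := u.reverse = u

/-- The number of distinct palindromic factors of a finite word `u`
(including the empty word). -/
noncomputable def palCount {A : Type*} (u : List A) : ℕ :=
  {v : List A | v <:+: u ∧ IsPalindrome v}.ncard

/-- A finite word `u` is rich if it has `|u| + 1` distinct palindromic factors. -/
def RichList {A : Type*} (u : List A) : Prop := palCount u = u.length + 1

/-- An infinite word is rich if all of its factors are rich. -/
def RichWord {A : Type*} (x : ℕ → A) : Prop := ∀ u, IsFactor u x → RichList u

/-- The defect of a finite word. -/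
noncomputable def defect {A : Type*} (u : List A) : ℕ := u.length + 1 - palCount u

/-- An infinite word has finite defect if the defects of its prefixes are bounded. -/
def FiniteDefect {A : Type*} (x : ℕ → A) : Prop :=
  ∃ C, ∀ n, defect (wordTake x n) ≤ C

/-- The extension of a morphism (given by its values on letters) to finite words. -/
def listApply {A B : Type*} (f : A → List B) (w : List A) : List B := w.flatMap f

/-- A morphism is non-erasing if the image of every letter is non-empty. -/
def NonErasing {A B : Type*} (f : A → List B) : Prop := ∀ a, f a ≠ []

/-- `y` is the image of the infinite word `x` under the morphism `f`, i.e. `y = f(x)` :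
the image of every prefix of `x` is a prefix of `y`. -/
def IsMorphicImage {A B : Type*} (f : A → List B) (x : ℕ → A) (y : ℕ → B) : Prop :=
  ∀ k, ∃ n, listApply f (wordTake x k) = wordTake y n

/-- A substitution is primitive if some power `τ^N` (`N ≥ 1`) maps every letter to a word
containing every letter. -/
def Primitive {A : Type*} (τ : A → List A) : Prop :=
  ∃ N : ℕ, 1 ≤ N ∧ ∀ a b : A, b ∈ (listApply τ)^[N] [a]

/-- An infinite word is pure primitive morphic if it is a fixed point of a primitive
substitution. -/
def PurePrimitiveMorphic {A : Type*} (x : ℕ → A) : Prop :=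
  ∃ τ : A → List A, NonErasing τ ∧ Primitive τ ∧ IsMorphicImage τ x x

/-- An infinite word is primitive morphic if it is the morphic image of a pure primitive
morphic word over some finite alphabet. -/
def PrimitiveMorphic {B : Type*} (y : ℕ → B) : Prop :=
  ∃ (A : Type) (_ : Fintype A) (f : A → List B) (x : ℕ → A),
    NonErasing f ∧ PurePrimitiveMorphic x ∧ IsMorphicImage f x y

/-- A morphism is of class P if `f(a) = p qₐ` with `p` and each `qₐ` palindromes. -/
def ClassP {A B : Type*} (f : A → List B) : Prop :=
  ∃ p : List B, IsPalindrome p ∧ ∀ a, ∃ q : List B, IsPalindrome q ∧ f a = p ++ q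

/-- Two morphisms are conjugate if `f(a)u = u g(a)` for all `a`, or `u f(a) = g(a) u`
for all `a`, for some finite word `u`. -/
def Conjugate {A B : Type*} (f g : A → List B) : Prop :=
  ∃ u : List B, (∀ a, f a ++ u = u ++ g a) ∨ (∀ a, u ++ f a = g a ++ u)

/-- Class P' : morphisms conjugate to some class P morphism. -/
def ClassP' {A B : Type*} (f : A → List B) : Prop :=
  ∃ g : A → List B, ClassP g ∧ Conjugate f g

/-- `FP'` : infinite words fixed by some primitive substitution of class P'. -/
def InFPprime {A : Type*} (x : ℕ → A) : Prop :=
  ∃ τ : A → List A, NonErasing τ ∧ Primitive τ ∧ ClassP' τ ∧ IsMorphicImage τ x x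

/-- The number of occurrences of `u` in the finite word `w`. -/
noncomputable def occCount {A : Type*} (u w : List A) : ℕ :=
  {i : ℕ | i + u.length ≤ w.length ∧ (w.drop i).take u.length = u}.ncard

/-- `v` is a first return to the non-empty factor `u` in `x` : `vu` is a factor of `x`
beginning (and ending) in `u` and containing exactly two occurrences of `u`;
`vu` is then the corresponding complete first return to `u`. -/
def FirstReturn {A : Type*} (u : List A) (x : ℕ → A) (v : List A) : Prop :=
  u ≠ [] ∧ IsFactor (v ++ u) x ∧ u <+: (v ++ u) ∧ occCount u (v ++ u) = 2

/-- An infinite word is uniformly recurrent if every factor occurs in every sufficiently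
long factor. -/
def UniformlyRecurrent {A : Type*} (x : ℕ → A) : Prop :=
  ∀ u : List A, IsFactor u x → ∃ n, ∀ v : List A, IsFactor v x → v.length = n → u <:+: v

/-- `d` is the derived word of `x` at the non-empty prefix `u` : `x` factors as a
concatenation `r 0, r 1, r 2, …` of first returns to `u` (each complete first return
`r n ++ u` occurring at the corresponding partial-sum position), and `d n` is the rank
of `r n` in the order of first occurrence, i.e. the number of distinct return words
appearing strictly before the first occurrence of `r n`. -/
def IsDerivedWord {A : Type*} (x : ℕ → A) (u : List A) (d : ℕ → ℕ) : Prop :=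
  ∃ r : ℕ → List A,
    (∀ n, FirstReturn u x (r n)) ∧
    (∀ n, OccursAt (r n ++ u) x (∑ i ∈ Finset.range n, (r i).length)) ∧
    (∀ n, d n = (r '' {k | k < sInf {k | r k = r n}}).ncard)

/-- Class P_ret of Balková et al.: a morphism injective on letters such that for some
palindrome `p` (the marker), each `f(a)p` is a palindrome beginning and ending in `p`
and containing exactly two occurrences of `p`. -/
def ClassPret {A B : Type*} (f : A → List B) : Prop :=
  (∀ a b : A, a ≠ b → f a ≠ f b) ∧
  ∃ p : List B, IsPalindrome p ∧ ∀ a,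
    IsPalindrome (f a ++ p) ∧ p <+: (f a ++ p) ∧ p <:+ (f a ++ p) ∧
      occCount p (f a ++ p) = 2

/-!
Appending a letter to a word creates at most one new palindromic factor (its longest palindromic
suffix), so a word `w` has at most `|w| + 1` of them, and richness passes to factors. Every factor
of `y` is a factor of `τ^(j+3)(1) 1` for some `j`, and this word reaches the bound: it contains the
palindromes `τ^(j+3)(1) 1` and `τ^(j+2)(1) 1`, of lengths of different parities (the odd one has
middle letter `0`), and a palindrome with middle letter `1` of length `|τ^(j+3)(1)| - |τ^(j+2)(1)| - 2`
(`innerPal j`). Their central factors are `|τ^(j+3)(1)| + 2` distinct palindromes. That these words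
are palindromes comes from `τ(a)ᴿ 0 = 0 τ(a)` for both letters `a`.
-/

section PalindromicFactors

variable {A : Type*}

def palFactors (u : List A) : Set (List A) := {v | v <:+: u ∧ IsPalindrome v}

theorem finite_palFactors (u : List A) : (palFactors u).Finite :=
  u.sublists.finite_toSet.subset fun _ hv => List.mem_sublists.2 hv.1.sublist

theorem palFactors_reverse (u : List A) : palFactors u.reverse = palFactors u := by
  ext v
  refine and_congr_left fun hv => ?_
  rw [← reverse_infix, hv, reverse_reverse]

theorem palCount_reverse (u : List A) : palCount u.reverse = palCount u :=
  congrArg Set.ncard (palFactors_reverse u)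

theorem palCount_nil : palCount ([] : List A) = 1 := by
  have : palFactors ([] : List A) = {[]} := by
    ext v
    simp only [palFactors, infix_nil, Set.mem_ofPred_eq, Set.mem_singleton_iff, and_iff_left_iff_imp]
    rintro rfl
    rfl
  exact (congrArg Set.ncard this).trans (Set.ncard_singleton _)

/-- A palindromic factor of `w ++ [a]` that does not occur in `w` is a suffix, and a shorter
palindromic suffix would reappear as a prefix of it, hence inside `w`. -/
theorem subsingleton_palFactors_append_singleton_diff (w : List A) (a : A) :
    (palFactors (w ++ [a]) \ palFactors w).Subsingleton := by
  have suffix : ∀ {v}, v ∈ palFactors (w ++ [a]) \ palFactors w → v <:+ w ++ [a] :=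
    fun hv => (infix_concat_iff.1 hv.1.1).resolve_right fun h => hv.2 ⟨h, hv.1.2⟩
  have key : ∀ {v v'}, v ∈ palFactors (w ++ [a]) \ palFactors w →
      v' ∈ palFactors (w ++ [a]) \ palFactors w → v <:+ v' → v = v' := by
    intro v v' hv hv' hvv'
    have hpre : v <+: v' := by
      rw [← reverse_suffix, hv.1.2, hv'.1.2]
      exact hvv'
    obtain ⟨r, rfl⟩ := hpre
    rcases eq_or_ne r [] with rfl | hr
    · exact (append_nil v).symm
    obtain ⟨s, hs⟩ := suffix hv'
    refine absurd ⟨⟨s, r.dropLast, ?_⟩, hv.1.2⟩ hv.2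
    have := congrArg dropLast hs
    rwa [dropLast_concat, ← append_assoc, dropLast_append_of_ne_nil hr] at this
  intro v hv v' hv'
  rcases suffix_or_suffix_of_suffix (suffix hv) (suffix hv') with h | h
  · exact key hv hv' h
  · exact (key hv' hv h).symm

theorem palCount_append_singleton_le (w : List A) (a : A) :
    palCount (w ++ [a]) ≤ palCount w + 1 :=
  calc palCount (w ++ [a])
      ≤ (palFactors (w ++ [a]) \ palFactors w).ncard + palCount w :=
        Set.ncard_le_ncard_sdiff_add_ncard _ _ (finite_palFactors w)
    _ ≤ palCount w + 1 := by
        have hsub := subsingleton_palFactors_append_singleton_diff w a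
        have := (Set.ncard_le_one hsub.finite).2 hsub
        omega

theorem palCount_append_le (w t : List A) : palCount (w ++ t) ≤ palCount w + t.length := by
  induction t using List.reverseRecOn with
  | nil => simp
  | append_singleton t a ih =>
    have := palCount_append_singleton_le (w ++ t) a
    rw [← append_assoc, length_append, length_singleton]
    omega

theorem palCount_le_length_add_one (u : List A) : palCount u ≤ u.length + 1 := by
  simpa [palCount_nil, add_comm] using palCount_append_le [] u

theorem palCount_append_append_le (s w t : List A) :
    palCount (s ++ w ++ t) ≤ palCount w + s.length + t.length := by
  have h₁ := palCount_append_le (s ++ w) t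
  have h₂ := palCount_append_le w.reverse s.reverse
  rw [← reverse_append, palCount_reverse, palCount_reverse, length_reverse] at h₂
  omega

theorem richList_of_le_palCount {u : List A} (h : u.length + 1 ≤ palCount u) : RichList u :=
  le_antisymm (palCount_le_length_add_one u) h

theorem RichList.of_infix {w u : List A} (hu : RichList u) (h : w <:+: u) : RichList w := by
  obtain ⟨s, t, rfl⟩ := h
  have := palCount_append_append_le s w t
  unfold RichList at hu
  simp only [length_append] at hu
  exact richList_of_le_palCount (by omega)

end PalindromicFactors

section CentralPalindromes

variable {A : Type*}

def evenPal (s : List A) : List A := s.reverse ++ s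

def oddPal (x : A) (s : List A) : List A := s.reverse ++ x :: s

@[simp] theorem length_evenPal (s : List A) : (evenPal s).length = 2 * s.length := by
  simp [evenPal, two_mul]

@[simp] theorem length_oddPal (x : A) (s : List A) : (oddPal x s).length = 2 * s.length + 1 := by
  simp only [oddPal, length_append, length_reverse, length_cons]
  omega

theorem isPalindrome_evenPal (s : List A) : IsPalindrome (evenPal s) := by
  simp [IsPalindrome, evenPal]

theorem isPalindrome_oddPal (x : A) (s : List A) : IsPalindrome (oddPal x s) := by
  simp [IsPalindrome, oddPal]

theorem evenPal_injective : Function.Injective (evenPal (A := A)) := by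
  intro s t h
  have hlen : s.reverse.length = t.reverse.length := by
    simpa using congrArg List.length h
  exact (append_inj h hlen).2

theorem oddPal_eq_oddPal_iff {x x' : A} {s t : List A} :
    oddPal x s = oddPal x' t ↔ x = x' ∧ s = t := by
  refine ⟨fun h => ?_, by rintro ⟨rfl, rfl⟩; rfl⟩
  have hlen : s.reverse.length = t.reverse.length := by
    simpa using congrArg List.length h
  simpa using (append_inj h hlen).2

theorem evenPal_ne_oddPal (x : A) (s t : List A) : evenPal s ≠ oddPal x t := fun h => by
  have := congrArg List.length h
  simp only [length_evenPal, length_oddPal] at this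
  omega

theorem evenPal_infix_evenPal {s t : List A} (h : s <+: t) : evenPal s <:+: evenPal t := by
  obtain ⟨r, rfl⟩ := h
  exact ⟨r.reverse, r, by simp [evenPal]⟩

theorem oddPal_infix_oddPal (x : A) {s t : List A} (h : s <+: t) : oddPal x s <:+: oddPal x t := by
  obtain ⟨r, rfl⟩ := h
  exact ⟨r.reverse, r, by simp [oddPal]⟩

theorem finite_setOf_prefix (s : List A) : {v | v <+: s}.Finite :=
  s.inits.finite_toSet.subset fun v hv => (mem_inits v s).2 hv

theorem ncard_setOf_prefix (s : List A) : {v | v <+: s}.ncard = s.length + 1 := by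
  induction s with
  | nil => simp
  | cons a s ih =>
    have hset : {v | v <+: a :: s} = insert [] ((a :: ·) '' {v | v <+: s}) := by
      ext v
      simp only [Set.mem_ofPred_eq, prefix_cons_iff, Set.mem_insert_iff, Set.mem_image]
      grind
    rw [hset, Set.ncard_insert_of_notMem (by simp) ((finite_setOf_prefix s).image _),
      Set.ncard_image_of_injective _ cons_injective, ih, length_cons]

theorem IsPalindrome.exists_eq_evenPal {P : List A} (hP : IsPalindrome P)
    (h : Even P.length) : ∃ s, P = evenPal s := by
  obtain ⟨n, hn⟩ := h
  refine ⟨P.drop n, ?_⟩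
  have htake : P.take n = (P.drop n).reverse := by
    conv_lhs => rw [← hP]
    rw [take_reverse, hn, Nat.add_sub_cancel]
  rw [evenPal, ← htake, take_append_drop]

theorem IsPalindrome.exists_eq_oddPal {P : List A} (hP : IsPalindrome P)
    (h : Odd P.length) : ∃ x s, P = oddPal x s := by
  obtain ⟨n, hn⟩ := h
  have hlt : n < P.length := by omega
  refine ⟨P[n], P.drop (n + 1), ?_⟩
  have htake : P.take n = (P.drop (n + 1)).reverse := by
    conv_lhs => rw [← hP]
    rw [take_reverse, hn]
    congr 2
    omega
  rw [oddPal, ← htake, ← drop_eq_getElem_cons hlt, take_append_drop]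

theorem odd_count_oddPal_iff [DecidableEq A] (a x : A) (s : List A) :
    Odd ((oddPal x s).count a) ↔ x = a := by
  simp only [oddPal, count_append, count_reverse, count_cons, beq_iff_eq]
  split_ifs with hx <;> simp [hx, ← two_mul]

/-- The central factors are told apart by their length and, for odd length, their middle letter. -/
theorem add_le_palCount_of_central {u s t r : List A} {a b : A} (hab : a ≠ b)
    (hs : evenPal s <:+: u) (ht : oddPal a t <:+: u) (hr : oddPal b r <:+: u) :
    s.length + t.length + r.length + 3 ≤ palCount u := by
  set E := evenPal '' {v | v <+: s}
  set Oa := oddPal a '' {v | v <+: t}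
  set Ob := oddPal b '' {v | v <+: r}
  have hEO : Disjoint E (Oa ∪ Ob) := by
    refine Set.disjoint_union_right.2 ⟨?_, ?_⟩ <;>
    · rw [Set.disjoint_left]
      rintro _ ⟨v, -, rfl⟩ ⟨w, -, h⟩
      exact evenPal_ne_oddPal _ _ _ h.symm
  have hOO : Disjoint Oa Ob := by
    rw [Set.disjoint_left]
    rintro _ ⟨v, -, rfl⟩ ⟨w, -, h⟩
    exact hab (oddPal_eq_oddPal_iff.1 h).1.symm
  have hsub : E ∪ (Oa ∪ Ob) ⊆ palFactors u := by
    rintro _ (⟨v, hv, rfl⟩ | ⟨v, hv, rfl⟩ | ⟨v, hv, rfl⟩)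
    · exact ⟨(evenPal_infix_evenPal hv).trans hs, isPalindrome_evenPal v⟩
    · exact ⟨(oddPal_infix_oddPal a hv).trans ht, isPalindrome_oddPal a v⟩
    · exact ⟨(oddPal_infix_oddPal b hv).trans hr, isPalindrome_oddPal b v⟩
  calc s.length + t.length + r.length + 3 = (E ∪ (Oa ∪ Ob)).ncard := by
        rw [Set.ncard_union_eq hEO ((finite_setOf_prefix s).image _) (((finite_setOf_prefix t).image _).union ((finite_setOf_prefix r).image _)),
          Set.ncard_union_eq hOO ((finite_setOf_prefix t).image _) ((finite_setOf_prefix r).image _),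
          Set.ncard_image_of_injective _ evenPal_injective,
          Set.ncard_image_of_injective _ fun _ _ h => (oddPal_eq_oddPal_iff.1 h).2,
          Set.ncard_image_of_injective _ fun _ _ h => (oddPal_eq_oddPal_iff.1 h).2,
          ncard_setOf_prefix, ncard_setOf_prefix, ncard_setOf_prefix]
        omega
    _ ≤ palCount u := Set.ncard_le_ncard hsub (finite_palFactors u)

theorem add_le_palCount [DecidableEq A] {u P Q R : List A} (a : A)
    (hP : P ∈ palFactors u) (hQ : Q ∈ palFactors u) (hR : R ∈ palFactors u)
    (hPe : Even P.length) (hQo : Odd Q.length) (hRo : Odd R.length)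
    (hQa : Odd (Q.count a)) (hRa : Even (R.count a)) :
    P.length / 2 + Q.length / 2 + R.length / 2 + 3 ≤ palCount u := by
  obtain ⟨s, rfl⟩ := hP.2.exists_eq_evenPal hPe
  obtain ⟨x, t, rfl⟩ := hQ.2.exists_eq_oddPal hQo
  obtain ⟨x', r, rfl⟩ := hR.2.exists_eq_oddPal hRo
  rw [odd_count_oddPal_iff] at hQa
  rw [← Nat.not_odd_iff_even, odd_count_oddPal_iff] at hRa
  subst hQa
  have := add_le_palCount_of_central (Ne.symm hRa) hP.1 hQ.1 hR.1
  simp only [length_evenPal, length_oddPal]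
  omega

end CentralPalindromes

section Morphism

variable {A B : Type*}

@[simp] theorem listApply_nil (f : A → List B) : listApply f [] = [] := rfl

@[simp] theorem listApply_cons (f : A → List B) (a : A) (w : List A) :
    listApply f (a :: w) = f a ++ listApply f w := rfl

@[simp] theorem listApply_append (f : A → List B) (v w : List A) :
    listApply f (v ++ w) = listApply f v ++ listApply f w :=
  flatMap_append

theorem reverse_listApply_append_singleton {f : A → List B} {c : B}
    (hf : ∀ a, (f a).reverse ++ [c] = c :: f a) (w : List A) :
    (listApply f w).reverse ++ [c] = c :: listApply f w.reverse := by
  induction w with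
  | nil => rfl
  | cons a w ih =>
    calc (listApply f (a :: w)).reverse ++ [c]
        = (listApply f w).reverse ++ ((f a).reverse ++ [c]) := by simp
      _ = ((listApply f w).reverse ++ [c]) ++ f a := by rw [hf]; simp
      _ = c :: listApply f (a :: w).reverse := by rw [ih]; simp

end Morphism

section Tau

def tau : Fin 2 → List (Fin 2) := ![[1, 1, 0], [1, 0]]

@[simp] theorem tau_zero : tau 0 = [1, 1, 0] := rfl

@[simp] theorem tau_one : tau 1 = [1, 0] := rfl

theorem length_listApply_tau (w : List (Fin 2)) :
    (listApply tau w).length = 2 * w.length + w.count 0 := by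
  induction w with
  | nil => rfl
  | cons a w ih =>
    fin_cases a <;>
    simp only [Fin.zero_eta, Fin.mk_one, listApply_cons, tau_zero, tau_one, length_append, ih,
      count_cons_self, count_cons_of_ne one_ne_zero, length_cons, length_nil] <;>
    omega

theorem count_listApply_tau (w : List (Fin 2)) : (listApply tau w).count 0 = w.length := by
  induction w with
  | nil => rfl
  | cons a w ih => fin_cases a <;> simp [ih]

theorem exists_listApply_tau_eq_append {p : List (Fin 2)} (hp : p ≠ []) :
    ∃ p', listApply tau p = p' ++ [1, 0] := by
  obtain ⟨p, a, rfl⟩ := p.eq_nil_or_concat.resolve_left hp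
  fin_cases a
  · exact ⟨listApply tau p ++ [1], by simp⟩
  · exact ⟨listApply tau p, by simp⟩

theorem exists_listApply_tau_eq_cons {s : List (Fin 2)} (hs : s ≠ []) :
    ∃ s', listApply tau s = 1 :: s' ∧ s' ≠ [] := by
  obtain ⟨a, s, rfl⟩ := exists_cons_of_ne_nil hs
  fin_cases a
  · exact ⟨1 :: 0 :: listApply tau s, by simp⟩
  · exact ⟨0 :: listApply tau s, by simp⟩

/-- Each `tau a` is a palindrome followed by `0`. -/
theorem reverse_listApply_tau_append_zero (w : List (Fin 2)) :
    (listApply tau w).reverse ++ [0] = 0 :: listApply tau w.reverse :=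
  reverse_listApply_append_singleton (by decide) w

theorem IsPalindrome.listApply_tau_append_one {w : List (Fin 2)} (hw : IsPalindrome (w ++ [1])) :
    IsPalindrome (listApply tau w ++ [1]) := by
  refine append_cancel_right (bs := [0]) ?_
  calc (listApply tau w ++ [1]).reverse ++ [0]
      = 1 :: ((listApply tau w).reverse ++ [0]) := by simp
    _ = listApply tau ((w ++ [1]).reverse) := by
        rw [reverse_listApply_tau_append_zero]; simp
    _ = listApply tau w ++ [1] ++ [0] := by rw [hw]; simp

theorem IsPalindrome.one_zero_append_listApply_tau_append_one {z : List (Fin 2)}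
    (hz : IsPalindrome z) : IsPalindrome ([1, 0] ++ listApply tau z ++ [1]) := by
  have h := reverse_listApply_tau_append_zero z
  rw [hz] at h
  simp [IsPalindrome, ← h]

end Tau

section TauIter

def tauIter (k : ℕ) : List (Fin 2) := (listApply tau)^[k] [1]

theorem tauIter_succ (k : ℕ) : tauIter (k + 1) = listApply tau (tauIter k) :=
  Function.iterate_succ_apply' _ _ _

theorem count_tauIter_succ (k : ℕ) : (tauIter (k + 1)).count 0 = (tauIter k).length := by
  rw [tauIter_succ, count_listApply_tau]

theorem length_tauIter_add_two (k : ℕ) :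
    (tauIter (k + 2)).length = 2 * (tauIter (k + 1)).length + (tauIter k).length := by
  rw [tauIter_succ (k + 1), length_listApply_tau, count_tauIter_succ]

theorem odd_length_tauIter_add_length_tauIter_succ (k : ℕ) :
    Odd ((tauIter k).length + (tauIter (k + 1)).length) := by
  induction k with
  | zero => decide
  | succ k ih =>
    rw [Nat.odd_iff] at *
    rw [length_tauIter_add_two]
    omega

theorem length_tauIter_lt_succ (k : ℕ) : (tauIter k).length < (tauIter (k + 1)).length := by
  rw [tauIter_succ, length_listApply_tau]
  have : 0 < (tauIter k).length := by
    induction k with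
    | zero => decide
    | succ k ih => rw [tauIter_succ, length_listApply_tau]; omega
  omega

theorem le_length_tauIter (k : ℕ) : k ≤ (tauIter k).length := by
  induction k with
  | zero => exact Nat.zero_le _
  | succ k ih => exact ih.trans_lt (length_tauIter_lt_succ k)

theorem tauIter_succ_append_one_prefix (k : ℕ) : tauIter (k + 1) ++ [1] <+: tauIter (k + 2) := by
  induction k with
  | zero => decide
  | succ k ih =>
    obtain ⟨t, ht⟩ := ih
    refine ⟨0 :: listApply tau t, ?_⟩
    calc tauIter (k + 2) ++ [1] ++ 0 :: listApply tau t
        = listApply tau (tauIter (k + 1) ++ [1] ++ t) := by rw [tauIter_succ (k + 1)]; simp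
      _ = tauIter (k + 3) := by rw [ht, tauIter_succ (k + 2)]

theorem isPalindrome_tauIter_succ_append_one (k : ℕ) : IsPalindrome (tauIter (k + 1) ++ [1]) := by
  induction k with
  | zero => rfl
  | succ k ih => rw [tauIter_succ]; exact ih.listApply_tau_append_one

def innerPal : ℕ → List (Fin 2)
  | 0 => [1, 0, 1, 0, 1]
  | j + 1 => [1, 0] ++ listApply tau (innerPal j) ++ [1]

theorem isPalindrome_innerPal (j : ℕ) : IsPalindrome (innerPal j) := by
  induction j with
  | zero => rfl
  | succ j ih => exact ih.one_zero_append_listApply_tau_append_one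

theorem length_innerPal (j : ℕ) :
    (innerPal j).length + (tauIter (j + 2)).length + 2 = (tauIter (j + 3)).length ∧
      (innerPal j).count 0 + (tauIter (j + 1)).length + 1 = (tauIter (j + 2)).length := by
  induction j with
  | zero => decide
  | succ j ih =>
    have h₁ : (tauIter (j + 3)).length = 2 * (tauIter (j + 2)).length + (tauIter (j + 1)).length :=
      length_tauIter_add_two (j + 1)
    have h₂ : (tauIter (j + 4)).length = 2 * (tauIter (j + 3)).length + (tauIter (j + 2)).length :=
      length_tauIter_add_two (j + 2)
    show (innerPal (j + 1)).length + (tauIter (j + 3)).length + 2 = (tauIter (j + 4)).length ∧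
      (innerPal (j + 1)).count 0 + (tauIter (j + 2)).length + 1 = (tauIter (j + 3)).length
    have hc : ([1, 0] : List (Fin 2)).count 0 = 1 ∧ ([1] : List (Fin 2)).count 0 = 0 := by decide
    simp only [innerPal, length_append, length_listApply_tau, count_append, count_listApply_tau,
      length_cons, length_nil, hc]
    omega

/-- `innerPal j` sits strictly inside `tauIter (j + 3)`, away from its ends, so that the
occurrence survives one more application of `tau`. -/
theorem exists_tauIter_eq_append_innerPal_append (j : ℕ) :
    ∃ p s, 2 ≤ p.length ∧ s ≠ [] ∧ tauIter (j + 3) = p ++ innerPal j ++ s := by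
  induction j with
  | zero => exact ⟨[1, 0, 1], [0, 1, 1, 0], by decide, by decide, by decide⟩
  | succ j ih =>
    obtain ⟨p, s, hp, hs, h⟩ := ih
    obtain ⟨p', hp'⟩ := exists_listApply_tau_eq_append (ne_nil_of_length_pos (by omega) : p ≠ [])
    obtain ⟨s', hs', hs'ne⟩ := exists_listApply_tau_eq_cons hs
    refine ⟨p', s', ?_, hs'ne, ?_⟩
    · have := congrArg length hp'
      rw [length_listApply_tau, length_append] at this
      simp only [length_cons, length_nil] at this
      omega
    · rw [tauIter_succ, h]
      simp [innerPal, hp', hs']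

theorem richList_tauIter_append_one (j : ℕ) : RichList (tauIter (j + 3) ++ [1]) := by
  set u := tauIter (j + 3) ++ [1]
  set v := tauIter (j + 2) ++ [1]
  have hu : u ∈ palFactors u := ⟨infix_refl u, isPalindrome_tauIter_succ_append_one (j + 2)⟩
  have hv : v ∈ palFactors u :=
    ⟨((tauIter_succ_append_one_prefix (j + 1)).trans (prefix_append _ _)).isInfix,
      isPalindrome_tauIter_succ_append_one (j + 1)⟩
  have hz : innerPal j ∈ palFactors u := by
    obtain ⟨p, s, -, -, h⟩ := exists_tauIter_eq_append_innerPal_append j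
    exact ⟨⟨p, s ++ [1], by simp [u, h]⟩, isPalindrome_innerPal j⟩
  have hlu : u.length = (tauIter (j + 3)).length + 1 := by simp [u]
  have hlv : v.length = (tauIter (j + 2)).length + 1 := by simp [v]
  have hcu : u.count 0 = (tauIter (j + 2)).length := by simp [u, count_tauIter_succ]
  have hcv : v.count 0 = (tauIter (j + 1)).length := by simp [v, count_tauIter_succ]
  obtain ⟨hlz, hcz⟩ := length_innerPal j
  have hp₁ : ((tauIter (j + 1)).length + (tauIter (j + 2)).length) % 2 = 1 :=
    Nat.odd_iff.1 (odd_length_tauIter_add_length_tauIter_succ (j + 1))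
  have hp₂ : ((tauIter (j + 2)).length + (tauIter (j + 3)).length) % 2 = 1 :=
    Nat.odd_iff.1 (odd_length_tauIter_add_length_tauIter_succ (j + 2))
  refine richList_of_le_palCount ?_
  by_cases h : (tauIter (j + 3)).length % 2 = 0
  · have := add_le_palCount 0 hv hu hz (Nat.even_iff.2 (by omega))
      (Nat.odd_iff.2 (by omega)) (Nat.odd_iff.2 (by omega)) (Nat.odd_iff.2 (by omega))
      (Nat.even_iff.2 (by omega))
    omega
  · have := add_le_palCount 0 hu hv hz (Nat.even_iff.2 (by omega))
      (Nat.odd_iff.2 (by omega)) (Nat.odd_iff.2 (by omega)) (Nat.odd_iff.2 (by omega))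
      (Nat.even_iff.2 (by omega))
    omega

end TauIter

section InfiniteWords

variable {A B : Type*}

@[simp] theorem length_wordTake (x : ℕ → A) (n : ℕ) : (wordTake x n).length = n := by
  simp [wordTake]

theorem wordTake_add (x : ℕ → A) (m n : ℕ) :
    wordTake x (m + n) = wordTake x m ++ (range n).map (fun k => x (m + k)) := by
  simp [wordTake, range_add, map_append, Function.comp_def]

theorem wordTake_prefix_wordTake (x : ℕ → A) {m n : ℕ} (h : m ≤ n) :
    wordTake x m <+: wordTake x n := by
  obtain ⟨d, rfl⟩ := Nat.exists_eq_add_of_le h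
  exact ⟨_, (wordTake_add x m d).symm⟩

theorem IsFactor.exists_infix_wordTake {u : List A} {x : ℕ → A} (h : IsFactor u x) :
    ∃ n, u <:+: wordTake x n := by
  obtain ⟨i, hi⟩ := h
  exact ⟨i + u.length, wordTake x i, [], by rw [wordTake_add, hi, append_nil]⟩

theorem IsMorphicImage.listApply_wordTake {f : A → List B} {x : ℕ → A} {y : ℕ → B}
    (h : IsMorphicImage f x y) (k : ℕ) :
    listApply f (wordTake x k) = wordTake y (listApply f (wordTake x k)).length := by
  obtain ⟨n, hn⟩ := h k
  rw [hn, length_wordTake]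

end InfiniteWords

theorem wordTake_length_tauIter {y : ℕ → Fin 2} (hfix : IsMorphicImage tau y y) (h0 : y 0 = 1)
    (k : ℕ) : wordTake y (tauIter k).length = tauIter k := by
  induction k with
  | zero => simp [wordTake, tauIter, h0]
  | succ k ih =>
    have := hfix.listApply_wordTake (tauIter k).length
    rw [ih, ← tauIter_succ] at this
    exact this.symm

/-- Encoding: `b = 0`, `c = 1`. -/
theorem tau_fixedPoint_rich (y : ℕ → Fin 2)
    (hfix : IsMorphicImage (![[1, 1, 0], [1, 0]] : Fin 2 → List (Fin 2)) y y)
    (h0 : y 0 = 1) :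
    RichWord y := by
  intro u hu
  obtain ⟨n, hn⟩ := hu.exists_infix_wordTake
  have hpre : wordTake y n <+: tauIter (n + 3) := by
    rw [← wordTake_length_tauIter hfix h0]
    exact wordTake_prefix_wordTake y ((Nat.le_add_right n 3).trans (le_length_tauIter _))
  exact (richList_tauIter_append_one n).of_infix (hn.trans (hpre.trans (prefix_append _ _)).isInfix)
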